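/- (Dual feasibility for isotropic states, multi-copy.) On ℂ^d ⊗ ℂ^d with 1/d ≤ p < 1, set A := ((d−1)/(1−p)) Φ_d and B := (I − Φ_d)/(1−p). Then: (i) Tr(Aσ) ≤ (d−1)/(d(1−p)) and Tr(Bσ) ≥ (d−1)/(d(1−p)) for every PPT state σ, hence Tr((B−A)σ) ≥ 0; (ii) Tr(A ρ_p) = p(d−1)/(1−p) and Tr(B ρ_p) = 1; and (iii) for every n ∈ ℕ and every PPT state σ on (ℂ^d ⊗ ℂ^d)^{⊗n} (bipartition grouping all first against all second factors), Tr((B^{⊗n} − A^{⊗n})σ) ≥ 0, while Tr(A^{⊗n} ρ_p^{⊗n}) = (p(d−1)/(1−p))^n and Tr(B^{⊗n} ρ_p^{⊗n}) = 1. -/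

import Mathlib

open scoped BigOperators ComplexOrder
open Filter Topology

noncomputable section

namespace QRT

open scoped Classical

variable {ι κ : Type*} [Fintype ι] [DecidableEq ι] [Fintype κ] [DecidableEq κ]

/-- A density matrix (quantum state): positive semidefinite with unit trace. -/
def IsState (ρ : Matrix ι ι ℂ) : Prop :=
  ρ.PosSemidef ∧ ρ.trace = 1

/-- Loewner order: `A ≤ B` iff `B - A` is positive semidefinite. -/
def Loewner (A B : Matrix ι ι ℂ) : Prop :=
  (B - A).PosSemidef

/-- Trace norm (sum of singular values): `‖A‖₁ = Tr √(AᴴA)`. -/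
def traceNorm (A : Matrix ι ι ℂ) : ℝ :=
  (((Matrix.posSemidef_conjTranspose_mul_self A).1.eigenvectorUnitary.1 *
    Matrix.diagonal (((↑) : ℝ → ℂ) ∘ (√·) ∘ (Matrix.posSemidef_conjTranspose_mul_self A).1.eigenvalues) *
    (star (Matrix.posSemidef_conjTranspose_mul_self A).1.eigenvectorUnitary : Matrix ι ι ℂ)).trace).re

/-- The max-relative entropy `D_max(ρ‖σ)` (base 2); `+∞` if infeasible. -/
def Dmax (ρ σ : Matrix ι ι ℂ) : EReal :=
  sInf {x : EReal | ∃ l : ℝ, 0 < l ∧ Loewner ρ (l • σ) ∧ x = ((Real.logb 2 l : ℝ) : EReal)}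

/-- The projective relative entropy (Hilbert projective metric). -/
def DOmega (ρ σ : Matrix ι ι ℂ) : EReal :=
  Dmax ρ σ + Dmax σ ρ

/-- Support inclusion `supp ρ ⊆ supp σ` for positive semidefinite matrices,
expressed as kernel inclusion `ker σ ⊆ ker ρ`. -/
def SuppLe (ρ σ : Matrix ι ι ℂ) : Prop :=
  ∀ v : ι → ℂ, σ.mulVec v = 0 → ρ.mulVec v = 0

/-- Application of a real function to a Hermitian matrix via the spectral decomposition. -/
def mfun (f : ℝ → ℝ) (A : Matrix ι ι ℂ) : Matrix ι ι ℂ :=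
  if hA : A.IsHermitian then
    (hA.eigenvectorUnitary : Matrix ι ι ℂ) *
      Matrix.diagonal (fun i => (f (hA.eigenvalues i) : ℂ)) *
      (hA.eigenvectorUnitary : Matrix ι ι ℂ).conjTranspose
  else 0

/-- Base-2 matrix logarithm on the support of a positive semidefinite matrix. -/
def mlog2 (A : Matrix ι ι ℂ) : Matrix ι ι ℂ :=
  mfun (fun x => if x ≤ 0 then 0 else Real.logb 2 x) A

/-- Umegaki quantum relative entropy (base 2):
`D(ρ‖σ) = Tr[ρ (log₂ ρ - log₂ σ)]` if `supp ρ ⊆ supp σ`, and `+∞` otherwise. -/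
def Drel (ρ σ : Matrix ι ι ℂ) : EReal :=
  if SuppLe ρ σ then (((ρ * (mlog2 ρ - mlog2 σ)).trace.re : ℝ) : EReal) else ⊤

/-- Relative entropy of a resource: `D_F(ρ) = min_{σ ∈ F} D(ρ‖σ)`. -/
def DF (F : Set (Matrix ι ι ℂ)) (ρ : Matrix ι ι ℂ) : EReal :=
  sInf {x : EReal | ∃ σ ∈ F, x = Drel ρ σ}

/-- Max-relative entropy of a resource. -/
def DmaxF (F : Set (Matrix ι ι ℂ)) (ρ : Matrix ι ι ℂ) : EReal :=
  sInf {x : EReal | ∃ σ ∈ F, x = Dmax ρ σ}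

/-- Projective relative entropy of a resource: `D_{Ω,F}(ρ) = min_{σ ∈ F} D_Ω(ρ‖σ)`. -/
def DOmegaF (F : Set (Matrix ι ι ℂ)) (ρ : Matrix ι ι ℂ) : EReal :=
  sInf {x : EReal | ∃ σ ∈ F, x = DOmega ρ σ}

/-- Min-relative entropy of a resource for a pure state `ψ`:
`D_{min,F}(ψ) = min_{σ∈F} (-log₂⟨ψ|σ|ψ⟩)` where `⟨ψ|σ|ψ⟩ = Tr(ψσ)`. -/
def DminF (F : Set (Matrix ι ι ℂ)) (ψ : Matrix ι ι ℂ) : EReal :=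
  sInf {x : EReal | ∃ σ ∈ F, 0 < ((ψ * σ).trace).re ∧
    x = ((-(Real.logb 2 (((ψ * σ).trace).re)) : ℝ) : EReal)}

/-- The convex cone generated by a set of states. -/
def cone (F : Set (Matrix ι ι ℂ)) : Set (Matrix ι ι ℂ) :=
  {A | ∃ t : ℝ, 0 ≤ t ∧ ∃ σ ∈ F, A = t • σ}

/-- `D_s(ω‖σ) := inf { log₂ λ : λ > 0, λσ - ω ∈ cone(F) }`. -/
def Ds (F : Set (Matrix ι ι ℂ)) (ω σ : Matrix ι ι ℂ) : EReal :=
  sInf {x : EReal | ∃ l : ℝ, 0 < l ∧ (l • σ - ω) ∈ cone F ∧ x = ((Real.logb 2 l : ℝ) : EReal)}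

/-- The free variant of the projective relative entropy:
`D_{Ω,s,F}(ω) := min_{σ∈F} [ D_s(ω‖σ) + D_max(σ‖ω) ]`. -/
def DOmegasF (F : Set (Matrix ι ι ℂ)) (ω : Matrix ι ι ℂ) : EReal :=
  sInf {x : EReal | ∃ σ ∈ F, x = Ds F ω σ + Dmax σ ω}

/-- The standard robustness `R_{s,F}(ρ) := inf{ λ ≥ 0 : ∃ σ ∈ F, (ρ+λσ)/(1+λ) ∈ F }`,
as an extended real (`+∞` if infeasible). -/
def Rs (F : Set (Matrix ι ι ℂ)) (ρ : Matrix ι ι ℂ) : EReal :=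
  sInf {x : EReal | ∃ l : ℝ, 0 ≤ l ∧ (∃ σ ∈ F, ((1 + l)⁻¹ • (ρ + l • σ)) ∈ F) ∧
    x = ((l : ℝ) : EReal)}

/-- `log₂(1 + R_{s,F}(ρ))`, the logarithmic standard robustness. -/
def logRs (F : Set (Matrix ι ι ℂ)) (ρ : Matrix ι ι ℂ) : EReal :=
  sInf {x : EReal | ∃ l : ℝ, 0 ≤ l ∧ (∃ σ ∈ F, ((1 + l)⁻¹ • (ρ + l • σ)) ∈ F) ∧
    x = ((Real.logb 2 (1 + l) : ℝ) : EReal)}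

/-- The Choi matrix of a linear map on matrices. -/
def choi (Λ : Matrix ι ι ℂ →ₗ[ℂ] Matrix κ κ ℂ) : Matrix (ι × κ) (ι × κ) ℂ :=
  Matrix.of fun p q => Λ (Matrix.single p.1 q.1 1) p.2 q.2

/-- Complete positivity, via Choi's theorem. -/
def IsCP (Λ : Matrix ι ι ℂ →ₗ[ℂ] Matrix κ κ ℂ) : Prop :=
  (choi Λ).PosSemidef

/-- Trace non-increasing on positive semidefinite inputs. -/
def TraceNonincreasing (Λ : Matrix ι ι ℂ →ₗ[ℂ] Matrix κ κ ℂ) : Prop :=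
  ∀ A : Matrix ι ι ℂ, A.PosSemidef → ((Λ A).trace).re ≤ (A.trace).re

/-- Normalization `A ↦ A / Tr A`. -/
def normalize (A : Matrix ι ι ℂ) : Matrix ι ι ℂ :=
  (A.trace)⁻¹ • A

/-- A free probabilistic operation: a completely positive trace–non-increasing map
that sends free states of `F` to free states of `F'` after renormalization. -/
def IsFreeOp (F : Set (Matrix ι ι ℂ)) (F' : Set (Matrix κ κ ℂ))
    (Λ : Matrix ι ι ℂ →ₗ[ℂ] Matrix κ κ ℂ) : Prop :=
  IsCP Λ ∧ TraceNonincreasing Λ ∧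
    ∀ σ ∈ F, 0 < ((Λ σ).trace).re → normalize (Λ σ) ∈ F'

/-- `n`-fold tensor (Kronecker) power of a matrix, indexed by `Fin n → ι`. -/
def tpow (ρ : Matrix ι ι ℂ) (n : ℕ) : Matrix (Fin n → ι) (Fin n → ι) ℂ :=
  Matrix.of fun i j => ∏ k, ρ (i k) (j k)

/-- Tensor product of tensor-power-indexed matrices. -/
def tmul {n m : ℕ} (A : Matrix (Fin n → ι) (Fin n → ι) ℂ)
    (B : Matrix (Fin m → ι) (Fin m → ι) ℂ) :
    Matrix (Fin (n + m) → ι) (Fin (n + m) → ι) ℂ :=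
  Matrix.of fun i j =>
    A (fun k => i (Fin.castAdd m k)) (fun k => j (Fin.castAdd m k)) *
      B (fun k => i (Fin.natAdd n k)) (fun k => j (Fin.natAdd n k))

/-- Partial trace over the tensor factor in position `k`. -/
def ptrace {n : ℕ} (σ : Matrix (Fin (n + 1) → ι) (Fin (n + 1) → ι) ℂ) (k : Fin (n + 1)) :
    Matrix (Fin n → ι) (Fin n → ι) ℂ :=
  Matrix.of fun i j => ∑ x : ι, σ (k.insertNth x i) (k.insertNth x j)

/-- Axioms I–IV for a family of free-state sets on tensor powers of `ℂ^d`: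
convex closed sets of states, containing the powers of a full-rank free state,
closed under partial traces and under tensor products. -/
structure IsFreeFamily (d : ℕ)
    (F : ∀ n : ℕ, Set (Matrix (Fin n → Fin d) (Fin n → Fin d) ℂ)) : Prop where
  states : ∀ n, ∀ σ ∈ F n, IsState σ
  convex : ∀ n, Convex ℝ (F n)
  closed : ∀ n, IsClosed (F n)
  fullRank : ∃ σ : Matrix (Fin d) (Fin d) ℂ, IsState σ ∧ σ.PosDef ∧ ∀ n, tpow σ n ∈ F n
  ptrace_mem : ∀ n, ∀ σ ∈ F (n + 1), ∀ k : Fin (n + 1), ptrace σ k ∈ F n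
  tmul_mem : ∀ n m, ∀ σ ∈ F n, ∀ σ' ∈ F m, tmul σ σ' ∈ F (n + m)

variable {I K : ℕ → Type*} [∀ n, Fintype (I n)] [∀ n, DecidableEq (I n)]
  [∀ n, Fintype (K n)] [∀ n, DecidableEq (K n)]

/-- The smallest trace-distance error achievable when transforming `ρseq n` into
`ωseq ⌊rn⌋` by free probabilistic operations. -/
def convErr (F : ∀ n, Set (Matrix (I n) (I n) ℂ)) (F' : ∀ n, Set (Matrix (K n) (K n) ℂ))
    (ρseq : ∀ n, Matrix (I n) (I n) ℂ) (ωseq : ∀ n, Matrix (K n) (K n) ℂ)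
    (r : ℝ) (n : ℕ) : ℝ :=
  sInf {e : ℝ |
    ∃ Λ : Matrix (I n) (I n) ℂ →ₗ[ℂ] Matrix (K ⌊r * n⌋₊) (K ⌊r * n⌋₊) ℂ,
      IsFreeOp (F n) (F' ⌊r * n⌋₊) Λ ∧
      e = (1 / 2) * traceNorm (normalize (Λ (ρseq n)) - ωseq ⌊r * n⌋₊)}

/-- The probabilistic transformation rate `r_prob`, as an extended real. -/
def rprob (F : ∀ n, Set (Matrix (I n) (I n) ℂ)) (F' : ∀ n, Set (Matrix (K n) (K n) ℂ))
    (ρseq : ∀ n, Matrix (I n) (I n) ℂ) (ωseq : ∀ n, Matrix (K n) (K n) ℂ) : EReal :=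
  sSup {x : EReal | ∃ r : ℝ, 0 ≤ r ∧ x = (r : EReal) ∧
    Tendsto (fun n => convErr F F' ρseq ωseq r n) atTop (nhds 0)}

/-- The strong converse probabilistic transformation rate `r†_prob`. -/
def rprobSC (F : ∀ n, Set (Matrix (I n) (I n) ℂ)) (F' : ∀ n, Set (Matrix (K n) (K n) ℂ))
    (ρseq : ∀ n, Matrix (I n) (I n) ℂ) (ωseq : ∀ n, Matrix (K n) (K n) ℂ) : EReal :=
  sSup {x : EReal | ∃ r : ℝ, 0 ≤ r ∧ x = (r : EReal) ∧
    liminf (fun n => convErr F F' ρseq ωseq r n) atTop < 1}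

/-- A pure state `ψ = |v⟩⟨v|` with `‖v‖ = 1`. -/
def IsPure (ψ : Matrix ι ι ℂ) : Prop :=
  IsState ψ ∧ ∃ v : ι → ℂ, ψ = Matrix.of fun i j => v i * (starRingEnd ℂ) (v j)

/-- Tensor product across the A/B bipartition of `n`-copy bipartite operators. -/
def abProd {dA dB n : ℕ} (A : Matrix (Fin n → Fin dA) (Fin n → Fin dA) ℂ)
    (B : Matrix (Fin n → Fin dB) (Fin n → Fin dB) ℂ) :
    Matrix (Fin n → Fin dA × Fin dB) (Fin n → Fin dA × Fin dB) ℂ :=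
  Matrix.of fun i j =>
    A (fun k => (i k).1) (fun k => (j k).1) * B (fun k => (i k).2) (fun k => (j k).2)

/-- Separable states on `n` copies of a bipartite system `ℂ^{dA} ⊗ ℂ^{dB}`, with respect to
the bipartition grouping all `A` factors against all `B` factors. -/
def SEP (dA dB n : ℕ) :
    Set (Matrix (Fin n → Fin dA × Fin dB) (Fin n → Fin dA × Fin dB) ℂ) :=
  closure (convexHull ℝ {ρ | ∃ A B, IsState A ∧ IsState B ∧ ρ = abProd A B})

/-- Separable states on a single copy of `ℂ^{dA} ⊗ ℂ^{dB}`. -/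
def SEP1 (dA dB : ℕ) : Set (Matrix (Fin dA × Fin dB) (Fin dA × Fin dB) ℂ) :=
  closure (convexHull ℝ
    {ρ | ∃ (A : Matrix (Fin dA) (Fin dA) ℂ) (B : Matrix (Fin dB) (Fin dB) ℂ),
      IsState A ∧ IsState B ∧ ρ = Matrix.of fun p q => A p.1 q.1 * B p.2 q.2})

/-- Partial transpose on the second subsystem (single copy). -/
def ptrans1 {dA dB : ℕ} (M : Matrix (Fin dA × Fin dB) (Fin dA × Fin dB) ℂ) :
    Matrix (Fin dA × Fin dB) (Fin dA × Fin dB) ℂ :=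
  Matrix.of fun p q => M (p.1, q.2) (q.1, p.2)

/-- PPT states on a single copy. -/
def PPT1 (dA dB : ℕ) : Set (Matrix (Fin dA × Fin dB) (Fin dA × Fin dB) ℂ) :=
  {σ | IsState σ ∧ (ptrans1 σ).PosSemidef}

/-- Partial transpose over all `B` factors of an `n`-copy bipartite system. -/
def ptransN {dA dB n : ℕ}
    (M : Matrix (Fin n → Fin dA × Fin dB) (Fin n → Fin dA × Fin dB) ℂ) :
    Matrix (Fin n → Fin dA × Fin dB) (Fin n → Fin dA × Fin dB) ℂ :=
  Matrix.of fun i j => M (fun k => ((i k).1, (j k).2)) (fun k => ((j k).1, (i k).2))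

/-- PPT states on `n` copies, w.r.t. the bipartition grouping all `A` factors
against all `B` factors. -/
def PPTn (dA dB n : ℕ) :
    Set (Matrix (Fin n → Fin dA × Fin dB) (Fin n → Fin dA × Fin dB) ℂ) :=
  {σ | IsState σ ∧ (ptransN σ).PosSemidef}

/-- The maximally entangled state `Φ_d` on `ℂ^d ⊗ ℂ^d`. -/
def PhiMax (d : ℕ) : Matrix (Fin d × Fin d) (Fin d × Fin d) ℂ :=
  Matrix.of fun p q => if p.1 = p.2 ∧ q.1 = q.2 then ((d : ℂ))⁻¹ else 0

/-- The isotropic state `ρ_p = p Φ_d + (1-p)(I - Φ_d)/(d²-1)`. -/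
def iso (d : ℕ) (p : ℝ) : Matrix (Fin d × Fin d) (Fin d × Fin d) ℂ :=
  p • PhiMax d + ((1 - p) / ((d : ℝ) ^ 2 - 1)) • (1 - PhiMax d)



/-!
Partial transposition preserves the pairing `Tr(Xσ) = Tr(X^Γ σ^Γ)`, and the partial transpose
of a PPT state is again a state, so it suffices to bound `A^Γ` from above and `B^Γ` from below
in the Loewner order. Since `Φ_d^Γ = F/d` with `F` the swap, a Hermitian involution, we get
`A^Γ ≤ c ≤ B^Γ` for `c = (d-1)/(d(1-p))`. On `n` copies, `(A^Γ)^{⊗n} = cⁿ F^{⊗n} ≤ cⁿ`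
because `F^{⊗n}` is again a Hermitian involution, while `(B^Γ)^{⊗n} ≥ cⁿ` because `X ≥ c ≥ 0`
implies `X^{⊗n} ≥ cⁿ` (induct on `n` with `X ⊗ Y - c·cⁿ = X ⊗ (Y - cⁿ) + (X - c) ⊗ cⁿ`).
The traces against `ρ_p^{⊗n}` are `n`-th powers of the single-copy ones, since `X ↦ X^{⊗n}`
is multiplicative and `Tr(X^{⊗n}) = (Tr X)ⁿ`.
-/

open scoped Matrix Kronecker

section TensorPower

variable {α : Type*}

theorem tpow_zero [DecidableEq α] (M : Matrix α α ℂ) : tpow M 0 = 1 := by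
  ext i j
  simp [tpow, Matrix.one_apply, Subsingleton.elim i j]

theorem tpow_succ [Fintype α] (M : Matrix α α ℂ) (n : ℕ) :
    tpow M (n + 1) = (M ⊗ₖ tpow M n).submatrix (Fin.consEquiv fun _ => α).symm
      (Fin.consEquiv fun _ => α).symm := by
  ext i j
  simp [tpow, Fin.prod_univ_succ, Fin.tail]

theorem tpow_mul [Fintype α] (X Y : Matrix α α ℂ) (n : ℕ) :
    tpow (X * Y) n = tpow X n * tpow Y n := by
  ext i j
  simp only [tpow, Matrix.mul_apply, Matrix.of_apply]
  rw [Fintype.prod_sum fun k b => X (i k) b * Y b (j k)]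
  simp only [Finset.prod_mul_distrib]

theorem tpow_one [DecidableEq α] (n : ℕ) : tpow (1 : Matrix α α ℂ) n = 1 := by
  ext i j
  simp only [tpow, Matrix.of_apply, Matrix.one_apply]
  by_cases h : i = j
  · simp [h]
  · obtain ⟨k, hk⟩ := Function.ne_iff.mp h
    exact (Finset.prod_eq_zero (Finset.mem_univ k) (if_neg hk)).trans (if_neg h).symm

theorem conjTranspose_tpow (X : Matrix α α ℂ) (n : ℕ) : (tpow X n)ᴴ = tpow Xᴴ n := by
  ext i j
  simp [tpow]

theorem tpow_smul (c : ℝ) (X : Matrix α α ℂ) (n : ℕ) : tpow (c • X) n = c ^ n • tpow X n := by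
  ext i j
  simp [tpow, Finset.prod_mul_distrib]

theorem trace_tpow [Fintype α] (X : Matrix α α ℂ) (n : ℕ) :
    (tpow X n).trace = X.trace ^ n := by
  simp only [Matrix.trace, Matrix.diag, tpow, Matrix.of_apply]
  rw [← Fin.prod_const, Fintype.prod_sum]

theorem trace_tpow_mul_tpow [Fintype α] (X Y : Matrix α α ℂ) (n : ℕ) :
    (tpow X n * tpow Y n).trace = (X * Y).trace ^ n := by
  rw [← tpow_mul, trace_tpow]

theorem kronecker_sub_smul_one {β : Type*} [DecidableEq α] [DecidableEq β]
    (M : Matrix α α ℂ) (N : Matrix β β ℂ) (a b : ℝ) :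
    M ⊗ₖ N - (a * b) • 1 = M ⊗ₖ (N - b • 1) + (M - a • 1) ⊗ₖ (b • 1) := by
  obtain ⟨P, rfl⟩ : ∃ P, M = P + a • 1 := ⟨M - a • 1, (sub_add_cancel _ _).symm⟩
  obtain ⟨Q, rfl⟩ : ∃ Q, N = Q + b • 1 := ⟨N - b • 1, (sub_add_cancel _ _).symm⟩
  simp only [add_sub_cancel_right, Matrix.add_kronecker, Matrix.kronecker_add,
    Matrix.smul_kronecker, Matrix.kronecker_smul, Matrix.one_kronecker_one]
  module

theorem posSemidef_tpow_sub_smul_one [Fintype α] [DecidableEq α] {M : Matrix α α ℂ} {a : ℝ}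
    (ha : 0 ≤ a) (hM : (M - a • 1).PosSemidef) :
    ∀ n, (tpow M n - a ^ n • 1).PosSemidef
  | 0 => by simp [tpow_zero, Matrix.PosSemidef.zero]
  | n + 1 => by
    have hM' : M.PosSemidef := by
      simpa using hM.add (Matrix.PosSemidef.one.smul ha)
    have hsplit : tpow M (n + 1) - a ^ (n + 1) • 1 =
        (M ⊗ₖ (tpow M n - a ^ n • 1) + (M - a • 1) ⊗ₖ (a ^ n • 1)).submatrix
          (Fin.consEquiv fun _ => α).symm (Fin.consEquiv fun _ => α).symm := by
      rw [tpow_succ, pow_succ', ← kronecker_sub_smul_one,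
        ← Matrix.submatrix_one_equiv (Fin.consEquiv fun _ => α).symm]
      rfl
    rw [hsplit]
    exact ((hM'.kronecker (posSemidef_tpow_sub_smul_one ha hM n)).add
      (hM.kronecker (Matrix.PosSemidef.one.smul (pow_nonneg ha n)))).submatrix _

end TensorPower

section Trace

variable {α : Type*} [Fintype α]

theorem posSemidef_one_sub_of_mul_self_eq_one [DecidableEq α] {S : Matrix α α ℂ}
    (hS : S.IsHermitian) (hSS : S * S = 1) : (1 - S).PosSemidef := by
  have hsq : (1 - S)ᴴ * (1 - S) = (2 : ℝ) • (1 - S) := by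
    rw [Matrix.conjTranspose_sub, Matrix.conjTranspose_one, hS.eq, sub_mul, mul_sub, mul_sub,
      hSS, one_mul, mul_one, one_mul]
    module
  have h := (Matrix.posSemidef_conjTranspose_mul_self (1 - S)).smul
    (inv_nonneg.mpr zero_le_two : (0 : ℝ) ≤ 2⁻¹)
  rwa [hsq, smul_smul, inv_mul_cancel₀ two_ne_zero, one_smul] at h

theorem posSemidef_one_sub_tpow [DecidableEq α] {S : Matrix α α ℂ} (hS : S.IsHermitian)
    (hSS : S * S = 1) (n : ℕ) : (1 - tpow S n).PosSemidef := by
  refine posSemidef_one_sub_of_mul_self_eq_one ?_ (by rw [← tpow_mul, hSS, tpow_one])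
  rw [Matrix.IsHermitian, conjTranspose_tpow, hS.eq]

theorem re_trace_mul_nonneg {X Y : Matrix α α ℂ} (hX : X.PosSemidef) (hY : Y.PosSemidef) :
    0 ≤ (X * Y).trace.re := by
  open scoped MatrixOrder in
  obtain ⟨C, rfl⟩ := CStarAlgebra.nonneg_iff_eq_star_mul_self.mp hX.nonneg
  rw [Matrix.star_eq_conjTranspose, Matrix.mul_assoc, Matrix.trace_mul_comm]
  exact (Complex.nonneg_iff.mp (hY.mul_mul_conjTranspose_same C).trace_nonneg).1

variable [DecidableEq α] {X τ : Matrix α α ℂ} {a : ℝ}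

theorem re_trace_mul_le_of_posSemidef (hX : (a • 1 - X).PosSemidef) (hτ : τ.PosSemidef)
    (htr : τ.trace = 1) : (X * τ).trace.re ≤ a := by
  have h := re_trace_mul_nonneg hX hτ
  rw [sub_mul, Matrix.trace_sub, Matrix.smul_mul, one_mul, Matrix.trace_smul, htr] at h
  simpa using h

theorem le_re_trace_mul_of_posSemidef (hX : (X - a • 1).PosSemidef) (hτ : τ.PosSemidef)
    (htr : τ.trace = 1) : a ≤ (X * τ).trace.re := by
  have h := re_trace_mul_nonneg hX hτ
  rw [sub_mul, Matrix.trace_sub, Matrix.smul_mul, one_mul, Matrix.trace_smul, htr] at h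
  simpa using h

end Trace

section PartialTranspose

variable {dA dB : ℕ}

theorem trace_ptrans1 (σ : Matrix (Fin dA × Fin dB) (Fin dA × Fin dB) ℂ) :
    (ptrans1 σ).trace = σ.trace := by
  simp [ptrans1, Matrix.trace]

theorem trace_ptrans1_mul_ptrans1 (X σ : Matrix (Fin dA × Fin dB) (Fin dA × Fin dB) ℂ) :
    (ptrans1 X * ptrans1 σ).trace = (X * σ).trace := by
  simp only [Matrix.trace, Matrix.diag, Matrix.mul_apply, ptrans1, Matrix.of_apply]
  rw [← Fintype.sum_prod_type', ← Fintype.sum_prod_type']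
  let e : (Fin dA × Fin dB) × (Fin dA × Fin dB) ≃ (Fin dA × Fin dB) × (Fin dA × Fin dB) :=
    ⟨fun x => ((x.1.1, x.2.2), (x.2.1, x.1.2)), fun x => ((x.1.1, x.2.2), (x.2.1, x.1.2)),
      fun _ => rfl, fun _ => rfl⟩
  exact Fintype.sum_equiv e _ _ fun _ => rfl

theorem trace_ptransN_mul_ptransN {n : ℕ}
    (X σ : Matrix (Fin n → Fin dA × Fin dB) (Fin n → Fin dA × Fin dB) ℂ) :
    (ptransN X * ptransN σ).trace = (X * σ).trace := by
  simp only [Matrix.trace, Matrix.diag, Matrix.mul_apply, ptransN, Matrix.of_apply]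
  rw [← Fintype.sum_prod_type', ← Fintype.sum_prod_type']
  let f : (Fin n → Fin dA × Fin dB) × (Fin n → Fin dA × Fin dB) →
      (Fin n → Fin dA × Fin dB) × (Fin n → Fin dA × Fin dB) :=
    fun x => (fun k => ((x.1 k).1, (x.2 k).2), fun k => ((x.2 k).1, (x.1 k).2))
  exact Fintype.sum_equiv ⟨f, f, fun _ => rfl, fun _ => rfl⟩ _ _ fun _ => rfl

theorem ptransN_sub {n : ℕ}
    (X Y : Matrix (Fin n → Fin dA × Fin dB) (Fin n → Fin dA × Fin dB) ℂ) :
    ptransN (X - Y) = ptransN X - ptransN Y :=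
  rfl

theorem ptransN_tpow (X : Matrix (Fin dA × Fin dB) (Fin dA × Fin dB) ℂ) (n : ℕ) :
    ptransN (tpow X n) = tpow (ptrans1 X) n :=
  rfl

theorem ptrans1_smul (r : ℝ) (X : Matrix (Fin dA × Fin dB) (Fin dA × Fin dB) ℂ) :
    ptrans1 (r • X) = r • ptrans1 X :=
  rfl

theorem ptrans1_sub (X Y : Matrix (Fin dA × Fin dB) (Fin dA × Fin dB) ℂ) :
    ptrans1 (X - Y) = ptrans1 X - ptrans1 Y :=
  rfl

theorem ptrans1_one : ptrans1 (1 : Matrix (Fin dA × Fin dB) (Fin dA × Fin dB) ℂ) = 1 := by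
  ext p q
  simp only [ptrans1, Matrix.of_apply, Matrix.one_apply, Prod.ext_iff]
  grind

end PartialTranspose

section Swap

variable (α : Type*) [DecidableEq α]

def swapOp : Matrix (α × α) (α × α) ℂ :=
  Equiv.Perm.permMatrix ℂ (Equiv.prodComm α α)

theorem isHermitian_swapOp : (swapOp α).IsHermitian := by
  rw [Matrix.IsHermitian, swapOp, Matrix.conjTranspose_permMatrix, Equiv.Perm.inv_def,
    Equiv.prodComm_symm]

theorem swapOp_mul_self [Fintype α] : swapOp α * swapOp α = 1 := by
  have h : (Equiv.prodComm α α : Equiv.Perm (α × α)) * Equiv.prodComm α α = 1 :=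
    Equiv.ext Prod.swap_swap
  rw [swapOp, ← Matrix.permMatrix_mul, h, Matrix.permMatrix_one]

end Swap

section Isotropic

variable {d : ℕ}

theorem ptrans1_PhiMax : ptrans1 (PhiMax d) = (d : ℝ)⁻¹ • swapOp (Fin d) := by
  ext p q
  simp [ptrans1, PhiMax, swapOp, Equiv.toPEquiv_apply, Prod.ext_iff, and_comm, eq_comm]

theorem posSemidef_smul_one_sub_ptrans1_smul_PhiMax {r : ℝ} (hr : 0 ≤ r) :
    ((r / d) • 1 - ptrans1 (r • PhiMax d)).PosSemidef := by
  rw [ptrans1_smul, ptrans1_PhiMax, smul_smul, ← div_eq_mul_inv, ← smul_sub]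
  exact (posSemidef_one_sub_of_mul_self_eq_one (isHermitian_swapOp _) (swapOp_mul_self _)).smul
    (by positivity)

theorem posSemidef_pow_smul_one_sub_tpow_ptrans1_smul_PhiMax {r : ℝ} (hr : 0 ≤ r) (n : ℕ) :
    ((r / d) ^ n • 1 - tpow (ptrans1 (r • PhiMax d)) n).PosSemidef := by
  rw [ptrans1_smul, ptrans1_PhiMax, smul_smul, ← div_eq_mul_inv, tpow_smul, ← smul_sub]
  exact (posSemidef_one_sub_tpow (isHermitian_swapOp _) (swapOp_mul_self _) n).smul
    (by positivity)

theorem posSemidef_ptrans1_smul_one_sub_PhiMax_sub {s : ℝ} (hs : 0 ≤ s) :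
    (ptrans1 (s • (1 - PhiMax d)) - (s * (1 - (d : ℝ)⁻¹)) • 1).PosSemidef := by
  have h : ptrans1 (s • (1 - PhiMax d)) - (s * (1 - (d : ℝ)⁻¹)) • 1 =
      (s * (d : ℝ)⁻¹) • (1 - swapOp (Fin d)) := by
    rw [ptrans1_smul, ptrans1_sub, ptrans1_one, ptrans1_PhiMax]
    module
  rw [h]
  exact (posSemidef_one_sub_of_mul_self_eq_one (isHermitian_swapOp _) (swapOp_mul_self _)).smul
    (by positivity)

theorem PhiMax_mul_self (hd : d ≠ 0) : PhiMax d * PhiMax d = PhiMax d := by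
  ext p q
  simp only [Matrix.mul_apply, PhiMax, Matrix.of_apply]
  rw [Fintype.sum_prod_type]
  by_cases hp : p.1 = p.2 <;> by_cases hq : q.1 = q.2 <;> simp only [hp, hq, true_and, and_true, false_and, and_false, and_self, ↓reduceIte, mul_ite, ite_mul,
      zero_mul, mul_zero, ite_self, Finset.sum_ite_eq, Finset.mem_univ, Finset.sum_const,
      Finset.card_univ, Fintype.card_fin, nsmul_eq_mul]
  field_simp

theorem trace_PhiMax (hd : d ≠ 0) : (PhiMax d).trace = 1 := by
  simp only [Matrix.trace, Matrix.diag, PhiMax, Matrix.of_apply]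
  rw [Fintype.sum_prod_type]
  simp only [and_self, Finset.sum_ite_eq, Finset.mem_univ, ↓reduceIte, Finset.sum_const,
    Finset.card_univ, Fintype.card_fin, nsmul_eq_mul]
  field_simp

theorem PhiMax_mul_iso (hd : d ≠ 0) (p : ℝ) : PhiMax d * iso d p = p • PhiMax d := by
  rw [iso, mul_add, Matrix.mul_smul, Matrix.mul_smul, mul_sub, mul_one, PhiMax_mul_self hd,
    sub_self, smul_zero, add_zero]

theorem trace_iso (hd : 1 < d) (p : ℝ) : (iso d p).trace = 1 := by
  have hd1 : (d : ℂ) ^ 2 - 1 ≠ 0 := by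
    have : (1 : ℝ) < d := by exact_mod_cast hd
    exact_mod_cast (by nlinarith : (d : ℝ) ^ 2 - 1 ≠ 0)
  rw [iso, Matrix.trace_add, Matrix.trace_smul, Matrix.trace_smul, Matrix.trace_sub,
    trace_PhiMax (by omega), Matrix.trace_one]
  simp only [Fintype.card_prod, Fintype.card_fin, Complex.real_smul]
  push_cast
  field_simp
  ring

theorem trace_PhiMax_mul_iso (hd : d ≠ 0) (p : ℝ) : (PhiMax d * iso d p).trace = p := by
  rw [PhiMax_mul_iso hd, Matrix.trace_smul, trace_PhiMax hd, Complex.real_smul, mul_one]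

theorem trace_one_sub_PhiMax_mul_iso (hd : 1 < d) (p : ℝ) :
    ((1 - PhiMax d) * iso d p).trace = 1 - p := by
  rw [sub_mul, one_mul, Matrix.trace_sub, trace_iso hd, trace_PhiMax_mul_iso (by omega)]

end Isotropic

section PPT

variable {dA dB : ℕ}

theorem re_trace_mul_le_of_mem_PPT1 {X σ : Matrix (Fin dA × Fin dB) (Fin dA × Fin dB) ℂ} {a : ℝ}
    (hX : (a • 1 - ptrans1 X).PosSemidef) (hσ : σ ∈ PPT1 dA dB) : (X * σ).trace.re ≤ a := by
  rw [← trace_ptrans1_mul_ptrans1]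
  exact re_trace_mul_le_of_posSemidef hX hσ.2 ((trace_ptrans1 σ).trans hσ.1.2)

theorem le_re_trace_mul_of_mem_PPT1 {X σ : Matrix (Fin dA × Fin dB) (Fin dA × Fin dB) ℂ} {a : ℝ}
    (hX : (ptrans1 X - a • 1).PosSemidef) (hσ : σ ∈ PPT1 dA dB) : a ≤ (X * σ).trace.re := by
  rw [← trace_ptrans1_mul_ptrans1]
  exact le_re_trace_mul_of_posSemidef hX hσ.2 ((trace_ptrans1 σ).trans hσ.1.2)

theorem re_trace_mul_nonneg_of_mem_PPTn {n : ℕ}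
    {X σ : Matrix (Fin n → Fin dA × Fin dB) (Fin n → Fin dA × Fin dB) ℂ}
    (hX : (ptransN X).PosSemidef) (hσ : σ ∈ PPTn dA dB n) : 0 ≤ (X * σ).trace.re := by
  rw [← trace_ptransN_mul_ptransN]
  exact re_trace_mul_nonneg hX hσ.2

end PPT

theorem isotropic_dual_feasibility_general {d : ℕ} (hd : 2 ≤ d)
    (p : ℝ) (hp1 : p < 1)
    (A B : Matrix (Fin d × Fin d) (Fin d × Fin d) ℂ)
    (hA : A = (((d : ℝ) - 1) / (1 - p)) • PhiMax d)
    (hB : B = ((1 - p)⁻¹ : ℝ) • ((1 : Matrix (Fin d × Fin d) (Fin d × Fin d) ℂ) - PhiMax d)) :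
    (∀ σ ∈ PPT1 d d,
      ((A * σ).trace).re ≤ ((d : ℝ) - 1) / ((d : ℝ) * (1 - p)) ∧
      ((d : ℝ) - 1) / ((d : ℝ) * (1 - p)) ≤ ((B * σ).trace).re ∧
      0 ≤ (((B - A) * σ).trace).re) ∧
    ((A * iso d p).trace = ((p * ((d : ℝ) - 1) / (1 - p) : ℝ) : ℂ) ∧
      (B * iso d p).trace = 1) ∧
    (∀ n : ℕ, ∀ σ ∈ PPTn d d n,
      0 ≤ (((tpow B n - tpow A n) * σ).trace).re) ∧
    (∀ n : ℕ,
      (tpow A n * tpow (iso d p) n).trace = (((p * ((d : ℝ) - 1) / (1 - p)) ^ n : ℝ) : ℂ) ∧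
      (tpow B n * tpow (iso d p) n).trace = 1) := by
  have hd0 : d ≠ 0 := by omega
  have hp : 0 < 1 - p := by linarith
  have hr : 0 ≤ ((d : ℝ) - 1) / (1 - p) :=
    div_nonneg (sub_nonneg.mpr (by exact_mod_cast (by omega : 1 ≤ d))) hp.le
  set c : ℝ := ((d : ℝ) - 1) / ((d : ℝ) * (1 - p)) with hc
  have hcA : ((d : ℝ) - 1) / (1 - p) / d = c := by rw [hc, div_div, mul_comm]
  have hcB : (1 - p)⁻¹ * (1 - (d : ℝ)⁻¹) = c := by rw [hc]; field_simp
  have hc0 : 0 ≤ c := hcA ▸ div_nonneg hr d.cast_nonneg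
  have hAΓ := posSemidef_smul_one_sub_ptrans1_smul_PhiMax (d := d) hr
  have hAΓn := posSemidef_pow_smul_one_sub_tpow_ptrans1_smul_PhiMax (d := d) hr
  have hBΓ := posSemidef_ptrans1_smul_one_sub_PhiMax_sub (d := d) (inv_nonneg.mpr hp.le)
  rw [hcA, ← hA] at hAΓ hAΓn
  rw [hcB, ← hB] at hBΓ
  have hAiso : (A * iso d p).trace = ((p * ((d : ℝ) - 1) / (1 - p) : ℝ) : ℂ) := by
    rw [hA, Matrix.smul_mul, Matrix.trace_smul, trace_PhiMax_mul_iso hd0, Complex.real_smul]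
    push_cast
    ring
  have hBiso : (B * iso d p).trace = 1 := by
    rw [hB, Matrix.smul_mul, Matrix.trace_smul, trace_one_sub_PhiMax_mul_iso hd,
      Complex.real_smul, Complex.ofReal_inv, Complex.ofReal_sub, Complex.ofReal_one]
    exact inv_mul_cancel₀ (by exact_mod_cast hp.ne')
  refine ⟨fun σ hσ => ?_, ⟨hAiso, hBiso⟩, fun n σ hσ => ?_, fun n => ?_⟩
  · have hAσ := re_trace_mul_le_of_mem_PPT1 hAΓ hσ
    have hBσ := le_re_trace_mul_of_mem_PPT1 hBΓ hσ
    refine ⟨hAσ, hBσ, ?_⟩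
    rw [sub_mul, Matrix.trace_sub, Complex.sub_re]
    linarith
  · refine re_trace_mul_nonneg_of_mem_PPTn ?_ hσ
    rw [ptransN_sub, ptransN_tpow, ptransN_tpow, ← sub_add_sub_cancel _ (c ^ n • 1)]
    exact (posSemidef_tpow_sub_smul_one hc0 hBΓ n).add (hAΓn n)
  · rw [trace_tpow_mul_tpow, trace_tpow_mul_tpow, hAiso, hBiso, one_pow, Complex.ofReal_pow]
    exact ⟨rfl, rfl⟩

/-- **dual feasibility for isotropic states, multi-copy.**
With `A := ((d-1)/(1-p)) Φ_d` and `B := (I - Φ_d)/(1-p)`: (i) for every PPT state `σ`,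
`Tr(Aσ) ≤ (d-1)/(d(1-p)) ≤ Tr(Bσ)`, hence `Tr((B-A)σ) ≥ 0`; (ii) `Tr(Aρ_p) = p(d-1)/(1-p)`
and `Tr(Bρ_p) = 1`; (iii) for every `n` and every PPT state `σ` on `n` copies,
`Tr((B^{⊗n} - A^{⊗n})σ) ≥ 0`, while `Tr(A^{⊗n}ρ_p^{⊗n}) = (p(d-1)/(1-p))^n` and
`Tr(B^{⊗n}ρ_p^{⊗n}) = 1`. -/
theorem isotropic_dual_feasibility {d : ℕ} (hd : 2 ≤ d)
    (p : ℝ) (hp : (d : ℝ)⁻¹ ≤ p) (hp1 : p < 1)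
    (A B : Matrix (Fin d × Fin d) (Fin d × Fin d) ℂ)
    (hA : A = (((d : ℝ) - 1) / (1 - p)) • PhiMax d)
    (hB : B = ((1 - p)⁻¹ : ℝ) • ((1 : Matrix (Fin d × Fin d) (Fin d × Fin d) ℂ) - PhiMax d)) :
    (∀ σ ∈ PPT1 d d,
      ((A * σ).trace).re ≤ ((d : ℝ) - 1) / ((d : ℝ) * (1 - p)) ∧
      ((d : ℝ) - 1) / ((d : ℝ) * (1 - p)) ≤ ((B * σ).trace).re ∧
      0 ≤ (((B - A) * σ).trace).re) ∧
    ((A * iso d p).trace = ((p * ((d : ℝ) - 1) / (1 - p) : ℝ) : ℂ) ∧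
      (B * iso d p).trace = 1) ∧
    (∀ n : ℕ, ∀ σ ∈ PPTn d d n,
      0 ≤ (((tpow B n - tpow A n) * σ).trace).re) ∧
    (∀ n : ℕ,
      (tpow A n * tpow (iso d p) n).trace = (((p * ((d : ℝ) - 1) / (1 - p)) ^ n : ℝ) : ℂ) ∧
      (tpow B n * tpow (iso d p) n).trace = 1) :=
  isotropic_dual_feasibility_general hd p hp1 A B hA hB

end QRT
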